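/- Multivariate chain rule: for f : Bⁿ → B (n ≥ 1), g : B → B, 1 ≤ i ≤ n, and all x ∈ Bⁿ, the partial variation of g ∘ f with respect to the i-th coordinate satisfies (g ∘ f)'_i(x) = xnor(g'(f(x)), f'_i(x)), where xnor is taken in the three-valued logic M. -/

import Mathlib

/-- The three-valued logic `M = {T, 0, F}`. -/
inductive Tri where
  | T : Tri
  | Z : Tri
  | F : Tri
deriving DecidableEq

/-- Negation in `M`, with `¬0 = 0`. -/
def Tri.neg : Tri → Tri
  | .T => .F
  | .Z => .Z
  | .F => .T

/-- XNOR in `M`: `0` if either argument is `0`, otherwise the Boolean XNOR. -/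
def Tri.xnor : Tri → Tri → Tri
  | .Z, _ => .Z
  | _, .Z => .Z
  | a, b => if a = b then .T else .F

/-- Inclusion of the Boolean set `B = {T, F}` into `M`. -/
def Tri.ofBool : Bool → Tri
  | true => .T
  | false => .F

/-- Variation `δ(x → y)` of a Boolean `x` to `y`, with order `F < T`
(`false < true`): `T` if `y > x`, `0` if `y = x`, `F` if `y < x`. -/
def bvar (x y : Bool) : Tri :=
  if x = y then .Z else if y then .T else .F

/-- Variation of `f : B → B`: `f'(x) = xnor(δ(x → ¬x), δ(f x → f ¬x))`. -/
def varB (f : Bool → Bool) (x : Bool) : Tri :=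
  Tri.xnor (bvar x (!x)) (bvar (f x) (f (!x)))

/-- `x` with its `i`-th coordinate negated. -/
def negAt {n : ℕ} (x : Fin n → Bool) (i : Fin n) : Fin n → Bool :=
  Function.update x i (!(x i))

/-- Partial variation of `f : Bⁿ → B` with respect to the `i`-th coordinate:
`f'_i(x) = xnor(δ(x_i → ¬x_i), δ(f x → f x_{¬i}))`. -/
def varBi {n : ℕ} (f : (Fin n → Bool) → Bool) (i : Fin n) (x : Fin n → Bool) : Tri :=
  Tri.xnor (bvar (x i) (!(x i))) (bvar (f x) (f (negAt x i)))

/-!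
Along the step `x → x_{¬i}`, the one-variable chain rule `bvar_comp` turns
`δ(g (f x) → g (f x_{¬i}))` into `xnor(g'(f x), δ(f x → f x_{¬i}))`; since `xnor` on `M` is
associative and commutative, the factor `g'(f x)` can then be pulled out of `(g ∘ f)'_i(x)`.
-/

namespace Tri

theorem xnor_comm (a b : Tri) : xnor a b = xnor b a := by
  cases a <;> cases b <;> rfl

theorem xnor_assoc (a b c : Tri) : xnor (xnor a b) c = xnor a (xnor b c) := by
  cases a <;> cases b <;> cases c <;> rfl

theorem xnor_left_comm (a b c : Tri) : xnor a (xnor b c) = xnor b (xnor a c) := by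
  rw [← xnor_assoc, xnor_comm a b, xnor_assoc]

theorem xnor_Z (a : Tri) : xnor a Z = Z := by
  cases a <;> rfl

theorem xnor_xnor_cancel_left {a : Tri} (ha : a ≠ Z) (b : Tri) : xnor a (xnor a b) = b := by
  cases a <;> cases b <;> first | rfl | exact absurd rfl ha

end Tri

theorem bvar_self (x : Bool) : bvar x x = .Z := if_pos rfl

theorem bvar_ne_Z {x y : Bool} (h : x ≠ y) : bvar x y ≠ .Z := by
  cases x <;> cases y <;> simp_all [bvar]

theorem bvar_comp (g : Bool → Bool) (a b : Bool) :
    bvar (g a) (g b) = Tri.xnor (varB g a) (bvar a b) := by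
  obtain rfl | rfl : b = a ∨ b = !a := by cases a <;> cases b <;> simp
  · rw [bvar_self, bvar_self, Tri.xnor_Z]
  · rw [varB, Tri.xnor_comm, Tri.xnor_xnor_cancel_left (bvar_ne_Z (Bool.self_ne_not a))]

theorem varBi_comp_general (n : ℕ) (f : (Fin n → Bool) → Bool)
    (g : Bool → Bool) (i : Fin n) (x : Fin n → Bool) :
    varBi (g ∘ f) i x = Tri.xnor (varB g (f x)) (varBi f i x) := by
  rw [varBi, Function.comp_apply, Function.comp_apply, bvar_comp, Tri.xnor_left_comm, varBi]

theorem varBi_comp (n : ℕ) (hn : 1 ≤ n) (f : (Fin n → Bool) → Bool)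
    (g : Bool → Bool) (i : Fin n) (x : Fin n → Bool) :
    varBi (g ∘ f) i x = Tri.xnor (varB g (f x)) (varBi f i x) :=
  varBi_comp_general n f g i x
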